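/- Let G be an (n,d,α,c⁻,c⁺)-expander graph with c⁻ < c⁺ and let ε > 0; set δ = ε/(c⁺ − c⁻). If X, Y ⊆ V satisfy X ⊆ Y, |Y| ≤ n/2 and (1 + δ)|X| ≥ |Y|, then (1 + c⁻ − ε)(d/n)|X||Yᶜ| ≤ e(X, Yᶜ) ≤ (1 + c⁺ + ε)(d/n)|X||Yᶜ|, where Yᶜ = V \ Y. -/

import Mathlib

/-!
The centred Laplacian `Δ_L` annihilates constants, so its quadratic form at the centred indicator
`1_S - (|S|/n)·1` is `e(S, Sᶜ) - (d/n)|S||Sᶜ|`, while that vector has squared norm `|S||Sᶜ|/n`.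
Hence `c⁻d I ⪯ Δ_L ⪯ c⁺d I` pins every cut:
`(1 + c⁻)(d/n)|S||Sᶜ| ≤ e(S, Sᶜ) ≤ (1 + c⁺)(d/n)|S||Sᶜ|`.
For `X ⊆ Y` and `Z = Y \ X`, symmetry of `A` gives `2 e(X, Yᶜ) = e(X, Xᶜ) + e(Y, Yᶜ) - e(Z, Zᶜ)`.
Bounding the three cuts, the terms in `c^±` combine to `2(1 + c^±)(d/n)|X||Yᶜ|` up to an error
`(c⁺ - c⁻)(d/n)|Z||Zᶜ|`, which is at most `2ε(d/n)|X||Yᶜ|` since `|Z| ≤ δ|X|` and, as `|Y| ≤ n/2`,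
`|Zᶜ| ≤ 2|Yᶜ|`.
-/

open Finset

noncomputable def opNorm {n : ℕ} (M : Matrix (Fin n) (Fin n) ℝ) : ℝ :=
  ‖LinearMap.toContinuousLinearMap (Matrix.toEuclideanLin M)‖

def onesMat (n : ℕ) : Matrix (Fin n) (Fin n) ℝ := Matrix.of fun _ _ => 1

def IsAdjMatrix {n : ℕ} (A : Matrix (Fin n) (Fin n) ℝ) : Prop :=
  A.IsSymm ∧ (∀ x y, A x y = 0 ∨ A x y = 1) ∧ ∀ x, A x x = 0

def IsEquilibrium {n : ℕ} (A : Matrix (Fin n) (Fin n) ℝ) (θ : Fin n → ℝ) : Prop :=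
  ∀ y, ∑ x, A x y * Real.sin (θ x - θ y) = 0

def IsStable {n : ℕ} (A : Matrix (Fin n) (Fin n) ℝ) (θ : Fin n → ℝ) : Prop :=
  IsEquilibrium A θ ∧
    ∀ f : Fin n → ℝ, 0 ≤ ∑ x, ∑ y, A x y * Real.cos (θ x - θ y) * (f x - f y) ^ 2

def FullySync {n : ℕ} (θ : Fin n → ℝ) : Prop :=
  ∀ x y, ∃ k : ℤ, θ x - θ y = 2 * Real.pi * k

def IsExpander {n : ℕ} (A : Matrix (Fin n) (Fin n) ℝ) (d α : ℝ) : Prop :=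
  opNorm (A - (d / n) • onesMat n) ≤ α * d

noncomputable def lapCentered {n : ℕ} (A : Matrix (Fin n) (Fin n) ℝ) (d : ℝ) :
    Matrix (Fin n) (Fin n) ℝ :=
  Matrix.diagonal (fun x => ∑ y, A x y) - A - d • (1 : Matrix (Fin n) (Fin n) ℝ)
    + (d / n) • onesMat n

def IsExpander5 {n : ℕ} (A : Matrix (Fin n) (Fin n) ℝ) (d α cm cp : ℝ) : Prop :=
  IsExpander A d α ∧
    (lapCentered A d - (cm * d) • (1 : Matrix (Fin n) (Fin n) ℝ)).PosSemidef ∧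
    ((cp * d) • (1 : Matrix (Fin n) (Fin n) ℝ) - lapCentered A d).PosSemidef

noncomputable def daido {n : ℕ} (k : ℕ) (θ : Fin n → ℝ) : ℂ :=
  (n : ℂ)⁻¹ * ∑ x, Complex.exp (Complex.I * k * θ x)

noncomputable def sFun (t : ℝ) : ℝ := if |t| ≤ Real.pi / 2 then Real.sin t ^ 2 else 1

noncomputable def Cset {n : ℕ} (θ : Fin n → ℝ) (ψ : ℝ) : Finset (Fin n) :=
  Finset.univ.filter fun x => ψ ≤ |θ x|

def eXY {n : ℕ} (A : Matrix (Fin n) (Fin n) ℝ) (X Y : Finset (Fin n)) : ℝ :=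
  ∑ x ∈ X, ∑ y ∈ Y, A x y

noncomputable def kerK (a b : ℝ) : ℝ := Real.sin (|a| - min |b| (Real.pi / 2))

def matGraph {n : ℕ} (A : Matrix (Fin n) (Fin n) ℝ) : SimpleGraph (Fin n) where
  Adj x y := x ≠ y ∧ A x y = 1 ∧ A y x = 1
  symm := ⟨fun _ _ h => ⟨h.1.symm, h.2.2, h.2.1⟩⟩
  loopless := ⟨fun _ ⟨h1, _⟩ => h1 rfl⟩

noncomputable def erMeasure (n : ℕ) (p : ℝ) (hp : p ≤ 1) :
    MeasureTheory.Measure ({e : Fin n × Fin n // e.1 < e.2} → Bool) :=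
  MeasureTheory.Measure.pi fun _ =>
    (PMF.bernoulli (Real.toNNReal p) (Real.toNNReal_le_one.mpr hp)).toMeasure

def erAdj (n : ℕ) (ω : {e : Fin n × Fin n // e.1 < e.2} → Bool) :
    Matrix (Fin n) (Fin n) ℝ :=
  Matrix.of fun x y =>
    if h : x < y then (if ω ⟨(x, y), h⟩ then 1 else 0)
    else if h : y < x then (if ω ⟨(y, x), h⟩ then 1 else 0) else 0

section QuadraticForm

open Matrix

variable {ι : Type*} [Fintype ι]

theorem indicator_one_dotProduct {R : Type*} [NonAssocSemiring R] (S : Finset ι) (v : ι → R) :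
    (S : Set ι).indicator 1 ⬝ᵥ v = ∑ x ∈ S, v x := by
  simp_rw [dotProduct, ← Set.indicator_mul_left, Pi.one_apply, one_mul]
  exact sum_indicator_subset v (subset_univ S)

theorem Matrix.IsSymm.dotProduct_mulVec_sub_smul_one {R : Type*} [CommRing R]
    {M : Matrix ι ι R} (hM : M.IsSymm) (hM1 : M *ᵥ 1 = 0) (v : ι → R) (c : R) :
    (v - c • 1) ⬝ᵥ M *ᵥ (v - c • 1) = v ⬝ᵥ M *ᵥ v := by
  have hM1' : (1 : ι → R) ᵥ* M = 0 := by rw [← mulVec_transpose, hM.eq, hM1]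
  rw [mulVec_sub, mulVec_smul, hM1, smul_zero, sub_zero, sub_dotProduct, smul_dotProduct,
    dotProduct_mulVec 1, hM1', zero_dotProduct, smul_zero, sub_zero]

theorem Matrix.PosSemidef.mul_dotProduct_self_le_dotProduct_mulVec [DecidableEq ι]
    {M : Matrix ι ι ℝ} {c : ℝ} (h : (M - c • 1).PosSemidef) (v : ι → ℝ) :
    c * (v ⬝ᵥ v) ≤ v ⬝ᵥ M *ᵥ v := by
  have := h.dotProduct_mulVec_nonneg v
  simp only [star_trivial, sub_mulVec, smul_mulVec, one_mulVec, dotProduct_sub,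
    dotProduct_smul, smul_eq_mul] at this
  linarith

theorem Matrix.PosSemidef.dotProduct_mulVec_le_mul_dotProduct_self [DecidableEq ι]
    {M : Matrix ι ι ℝ} {c : ℝ} (h : (c • 1 - M).PosSemidef) (v : ι → ℝ) :
    v ⬝ᵥ M *ᵥ v ≤ c * (v ⬝ᵥ v) := by
  have := h.dotProduct_mulVec_nonneg v
  simp only [star_trivial, sub_mulVec, smul_mulVec, one_mulVec, dotProduct_sub,
    dotProduct_smul, smul_eq_mul] at this
  linarith

theorem cast_card_compl [DecidableEq ι] (S : Finset ι) : (#Sᶜ : ℝ) = Fintype.card ι - #S := by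
  rw [card_compl, Nat.cast_sub (card_le_univ S)]

noncomputable def centeredIndicator (S : Finset ι) : ι → ℝ :=
  (S : Set ι).indicator 1 - ((#S : ℝ) / Fintype.card ι) • 1

theorem centeredIndicator_dotProduct_self [DecidableEq ι] (S : Finset ι) :
    centeredIndicator S ⬝ᵥ centeredIndicator S = #S * #Sᶜ / Fintype.card ι := by
  rcases (Fintype.card ι).eq_zero_or_pos with h | h
  · have := Fintype.card_eq_zero_iff.mp h
    simp [dotProduct]
  have : (Fintype.card ι : ℝ) ≠ 0 := by positivity
  simp only [centeredIndicator, dotProduct_sub, sub_dotProduct, dotProduct_smul,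
    smul_dotProduct, indicator_one_dotProduct, cast_card_compl]
  simp only [Set.indicator_apply, SetLike.mem_coe, Pi.one_apply, sum_ite_mem, inter_self,
    sum_const, nsmul_eq_mul, mul_one, dotProduct, mul_ite, mul_zero, univ_inter, smul_eq_mul,
    card_univ]
  field_simp
  ring

end QuadraticForm

section Cuts

open Matrix

variable {n : ℕ}

theorem indicator_one_dotProduct_mulVec_indicator_one (M : Matrix (Fin n) (Fin n) ℝ)
    (S T : Finset (Fin n)) :
    (S : Set (Fin n)).indicator 1 ⬝ᵥ M *ᵥ (T : Set (Fin n)).indicator 1 = eXY M S T := by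
  simp only [indicator_one_dotProduct, mulVec, dotProduct_comm (M _), eXY]

theorem eXY_union_left (A : Matrix (Fin n) (Fin n) ℝ) {S₁ S₂ : Finset (Fin n)}
    (h : Disjoint S₁ S₂) (T : Finset (Fin n)) :
    eXY A (S₁ ∪ S₂) T = eXY A S₁ T + eXY A S₂ T :=
  sum_union h

theorem eXY_union_right (A : Matrix (Fin n) (Fin n) ℝ) (S : Finset (Fin n))
    {T₁ T₂ : Finset (Fin n)} (h : Disjoint T₁ T₂) :
    eXY A S (T₁ ∪ T₂) = eXY A S T₁ + eXY A S T₂ := by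
  simp only [eXY, sum_union h, sum_add_distrib]

theorem eXY_comm {A : Matrix (Fin n) (Fin n) ℝ} (hA : A.IsSymm) (S T : Finset (Fin n)) :
    eXY A S T = eXY A T S :=
  sum_comm.trans <| sum_congr rfl fun _ _ => sum_congr rfl fun _ _ => hA.apply _ _

theorem two_mul_eXY_compl_of_subset {A : Matrix (Fin n) (Fin n) ℝ} (hA : A.IsSymm)
    {X Y : Finset (Fin n)} (hXY : X ⊆ Y) :
    2 * eXY A X Yᶜ = eXY A X Xᶜ + eXY A Y Yᶜ - eXY A (Y \ X) (Y \ X)ᶜ := by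
  have hXc : Xᶜ = (Y \ X) ∪ Yᶜ := by
    ext x; have := @hXY x; simp only [mem_compl, mem_union, mem_sdiff]; tauto
  have hZc : (Y \ X)ᶜ = X ∪ Yᶜ := by
    ext x; have := @hXY x; simp only [mem_compl, mem_union, mem_sdiff]; tauto
  have hY : eXY A Y Yᶜ = eXY A X Yᶜ + eXY A (Y \ X) Yᶜ := by
    rw [← eXY_union_left A disjoint_sdiff, union_sdiff_of_subset hXY]
  have hdisj : ∀ {S}, S ⊆ Y → Disjoint S Yᶜ := disjoint_compl_right.mono_left
  rw [hXc, eXY_union_right _ _ (hdisj sdiff_subset), hZc, eXY_union_right _ _ (hdisj hXY),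
    eXY_comm hA (Y \ X) X, hY]
  ring

theorem lapCentered_isSymm {A : Matrix (Fin n) (Fin n) ℝ} (hA : A.IsSymm) (d : ℝ) :
    (lapCentered A d).IsSymm := by
  have hJ : (onesMat n).IsSymm := IsSymm.ext fun _ _ => rfl
  exact (((isSymm_diagonal _).sub hA).sub (isSymm_one.smul d)).add (hJ.smul _)

theorem lapCentered_apply (A : Matrix (Fin n) (Fin n) ℝ) (d : ℝ) (x y : Fin n) :
    lapCentered A d x y = (if x = y then ∑ z, A x z - d else 0) - A x y + d / n := by
  simp only [lapCentered, onesMat, smul_of, Matrix.add_apply, Matrix.sub_apply, diagonal_apply,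
    Matrix.smul_apply, one_apply, smul_eq_mul, of_apply, Pi.smul_apply]
  split_ifs <;> ring

theorem lapCentered_mulVec_one (A : Matrix (Fin n) (Fin n) ℝ) (d : ℝ) :
    lapCentered A d *ᵥ 1 = 0 := by
  rcases n.eq_zero_or_pos with rfl | hn
  · exact Subsingleton.elim _ _
  ext x
  simp only [mulVec, dotProduct, lapCentered_apply, Pi.one_apply, mul_one, sum_add_distrib,
    sum_sub_distrib, sum_ite_eq, mem_univ, ↓reduceIte, sub_sub_cancel_left, sum_const, card_univ,
    Fintype.card_fin, nsmul_eq_mul, Pi.zero_apply]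
  field_simp
  ring

theorem eXY_lapCentered_self (A : Matrix (Fin n) (Fin n) ℝ) (d : ℝ) (S : Finset (Fin n)) :
    eXY (lapCentered A d) S S = eXY A S Sᶜ - d / n * #S * #Sᶜ := by
  rcases n.eq_zero_or_pos with rfl | hn
  · simp [eq_empty_of_isEmpty S, eXY]
  simp only [eXY, lapCentered_apply, ← sum_add_sum_compl S (A _), sum_add_distrib,
    sum_sub_distrib, sum_ite_eq, sum_const, nsmul_eq_mul, sum_ite_mem, inter_self, cast_card_compl,
    Fintype.card_fin]
  field_simp
  ring

theorem centeredIndicator_dotProduct_lapCentered {A : Matrix (Fin n) (Fin n) ℝ}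
    (hA : A.IsSymm) (d : ℝ) (S : Finset (Fin n)) :
    centeredIndicator S ⬝ᵥ lapCentered A d *ᵥ centeredIndicator S =
      eXY A S Sᶜ - d / n * #S * #Sᶜ := by
  rw [centeredIndicator, (lapCentered_isSymm hA d).dotProduct_mulVec_sub_smul_one
    (lapCentered_mulVec_one A d), indicator_one_dotProduct_mulVec_indicator_one,
    eXY_lapCentered_self]

theorem one_add_mul_le_eXY_compl {A : Matrix (Fin n) (Fin n) ℝ} (hA : A.IsSymm) {d c : ℝ}
    (h : (lapCentered A d - (c * d) • 1).PosSemidef) (S : Finset (Fin n)) :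
    (1 + c) * (d / n) * #S * #Sᶜ ≤ eXY A S Sᶜ := by
  have := h.mul_dotProduct_self_le_dotProduct_mulVec (centeredIndicator S)
  rw [centeredIndicator_dotProduct_lapCentered hA, centeredIndicator_dotProduct_self,
    Fintype.card_fin] at this
  linarith [show c * d * (#S * #Sᶜ / n) = c * (d / n) * #S * #Sᶜ by ring]

theorem eXY_compl_le_one_add_mul {A : Matrix (Fin n) (Fin n) ℝ} (hA : A.IsSymm) {d c : ℝ}
    (h : ((c * d) • 1 - lapCentered A d).PosSemidef) (S : Finset (Fin n)) :
    eXY A S Sᶜ ≤ (1 + c) * (d / n) * #S * #Sᶜ := by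
  have := h.dotProduct_mulVec_le_mul_dotProduct_self (centeredIndicator S)
  rw [centeredIndicator_dotProduct_lapCentered hA, centeredIndicator_dotProduct_self,
    Fintype.card_fin] at this
  linarith [show c * d * (#S * #Sᶜ / n) = c * (d / n) * #S * #Sᶜ by ring]

end Cuts

theorem expander_mixing_nested_general {n : ℕ} (A : Matrix (Fin n) (Fin n) ℝ)
    (hA : IsAdjMatrix A) (d α cm cp : ℝ) (hd : 0 < d)
    (hlt : cm < cp) (hexp : IsExpander5 A d α cm cp)
    (ε : ℝ) (X Y : Finset (Fin n)) (hXY : X ⊆ Y)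
    (hY : (Y.card : ℝ) ≤ n / 2)
    (hsize : (1 + ε / (cp - cm)) * X.card ≥ (Y.card : ℝ)) :
    (1 + cm - ε) * (d / n) * X.card * Yᶜ.card ≤ eXY A X Yᶜ ∧
      eXY A X Yᶜ ≤ (1 + cp + ε) * (d / n) * X.card * Yᶜ.card := by
  obtain ⟨hsymm, -, -⟩ := hA
  obtain ⟨-, hlower, hupper⟩ := hexp
  have hsplit := two_mul_eXY_compl_of_subset hsymm hXY
  have hcard : (#(Y \ X) : ℝ) = #Y - #X := by
    rw [card_sdiff_of_subset hXY, Nat.cast_sub (card_le_card hXY)]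
  have hlowX := one_add_mul_le_eXY_compl hsymm hlower X
  have hlowY := one_add_mul_le_eXY_compl hsymm hlower Y
  have hupX := eXY_compl_le_one_add_mul hsymm hupper X
  have hupY := eXY_compl_le_one_add_mul hsymm hupper Y
  have hlowZ := one_add_mul_le_eXY_compl hsymm hlower (Y \ X)
  have hupZ := eXY_compl_le_one_add_mul hsymm hupper (Y \ X)
  simp only [cast_card_compl, Fintype.card_fin, hcard] at hlowX hlowY hupX hupY hlowZ hupZ ⊢
  have hXY' : (#X : ℝ) ≤ #Y := by exact_mod_cast card_le_card hXY
  have hslack : (cp - cm) * ((#Y - #X) * (n - (#Y - #X))) ≤ 2 * ε * (#X * (n - #Y)) := by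
    have hc : 0 < cp - cm := sub_pos.mpr hlt
    have hZX : (#Y - #X : ℝ) * (cp - cm) ≤ ε * #X :=
      (le_div_iff₀ hc).mp (by rw [mul_div_right_comm]; linarith)
    nlinarith [mul_le_mul_of_nonneg_right hZX (show 0 ≤ (n - (#Y - #X) : ℝ) by linarith),
      mul_nonneg (show 0 ≤ ε * #X by nlinarith) (show 0 ≤ (n : ℝ) - #Y - #X by linarith)]
  have hslack' := mul_le_mul_of_nonneg_left hslack (by positivity : 0 ≤ d / n)
  constructor <;> linarith

theorem expander_mixing_nested {n : ℕ} (A : Matrix (Fin n) (Fin n) ℝ)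
    (hA : IsAdjMatrix A) (d α cm cp : ℝ) (hd : 0 < d) (hα : 0 < α)
    (hlt : cm < cp) (hexp : IsExpander5 A d α cm cp)
    (ε : ℝ) (hε : 0 < ε) (X Y : Finset (Fin n)) (hXY : X ⊆ Y)
    (hY : (Y.card : ℝ) ≤ n / 2)
    (hsize : (1 + ε / (cp - cm)) * X.card ≥ (Y.card : ℝ)) :
    (1 + cm - ε) * (d / n) * X.card * Yᶜ.card ≤ eXY A X Yᶜ ∧
      eXY A X Yᶜ ≤ (1 + cp + ε) * (d / n) * X.card * Yᶜ.card :=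
  expander_mixing_nested_general A hA d α cm cp hd hlt hexp ε X Y hXY hY hsize
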